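/- Let n ≥ 1 and let S_n(Sym_n) be the monoid presented by generators x_1,…,x_n and relations x_{σ(1)}x_{σ(2)}⋯x_{σ(n)} = x_1x_2⋯x_n for all σ ∈ Sym_n. Then two words u, v in the free monoid on x_1,…,x_n, each of which contains a subword of the form x_{σ(1)}x_{σ(2)}⋯x_{σ(n)} for some σ ∈ Sym_n, represent the same element of S_n(Sym_n) if and only if every generator x_i occurs in u and in v the same number of times. -/

import Mathlib

/-- The word `x_{σ(1)} x_{σ(2)} ⋯ x_{σ(n)}` in the free monoid on `n` generators
(generator `x_j` is indexed by `j-1 : Fin n`). -/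
def permWord {n : ℕ} (σ : Equiv.Perm (Fin n)) : FreeMonoid (Fin n) :=
  FreeMonoid.ofList (List.ofFn fun i => σ i)

/-- The word `x_ε = x_1 x_2 ⋯ x_n`. -/
def epsWord (n : ℕ) : FreeMonoid (Fin n) :=
  FreeMonoid.ofList (List.ofFn fun i : Fin n => i)

/-- The defining relations `x_{σ(1)} ⋯ x_{σ(n)} = x_1 ⋯ x_n`, `σ ∈ Sym_n`. -/
def symRel (n : ℕ) : FreeMonoid (Fin n) → FreeMonoid (Fin n) → Prop :=
  fun a b => ∃ σ : Equiv.Perm (Fin n), a = permWord σ ∧ b = epsWord n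

/-- The canonical projection from the free monoid onto `S_n(Sym_n)`. -/
def proj (n : ℕ) : FreeMonoid (Fin n) →* PresentedMonoid (symRel n) :=
  PresentedMonoid.mk (symRel n)

/-- `u` contains a subword of the form `x_{σ(1)} ⋯ x_{σ(n)}` for some `σ ∈ Sym_n`. -/
def HasPermSubword {n : ℕ} (u : FreeMonoid (Fin n)) : Prop :=
  ∃ (σ : Equiv.Perm (Fin n)) (a b : FreeMonoid (Fin n)), u = a * permWord σ * b

/-- The word `x_1^{m_1} · x_ε · x_2^{m_2} ⋯ x_n^{m_n}` (0-indexed: `m i` is the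
exponent of generator `i`). -/
def normalWord (n : ℕ) (h : 0 < n) (m : Fin n → ℕ) : FreeMonoid (Fin n) :=
  FreeMonoid.ofList (List.replicate (m ⟨0, h⟩) ⟨0, h⟩) * epsWord n *
    FreeMonoid.ofList (((List.finRange n).drop 1).flatMap fun i => List.replicate (m i) i)

/-!
In `S_n(Sym_n)` every anagram of `ε = x_1 ⋯ x_n` equals `ε`. Completing a word `a` without
repeated letters to an anagram `a ++ b` of `ε`, we get `a' ε = a' b a = ε a` for every anagram
`a'` of `a`: hence `ε` is central and `ε x_i x_j = ε x_j x_i`, so `ε w` depends only on the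
letter counts of `w`. A word containing a subword `x_{σ(1)} ⋯ x_{σ(n)}` equals `ε w` for `w`
the word of its remaining letters, which gives one direction; the other holds because the
defining relations preserve letter counts.
-/

open List

def FreeMonoid.permCon (α : Type*) : Con (FreeMonoid α) where
  r u v := u.toList ~ v.toList
  iseqv := ⟨fun _ => .refl _, .symm, .trans⟩
  mul' h₁ h₂ := h₁.append h₂

section

variable {n : ℕ}

theorem exists_perm_ofFn_eq {l : List (Fin n)} (h : l ~ finRange n) :
    ∃ σ : Equiv.Perm (Fin n), ofFn σ = l := by
  have hl : l.length = n := by simpa using h.length_eq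
  have hnd : l.Nodup := h.nodup_iff.2 (nodup_finRange n)
  have hmem (x : Fin n) : x ∈ l := h.mem_iff.2 (mem_finRange x)
  refine ⟨(finCongr hl.symm).trans (hnd.getEquivOfForallMemList l hmem), ?_⟩
  conv_rhs => rw [← ofFn_get l]
  rw [ofFn_congr hl.symm]
  rfl

theorem toList_permWord_perm (σ : Equiv.Perm (Fin n)) : (permWord σ).toList ~ finRange n :=
  σ.ofFn_comp_perm id

theorem toList_epsWord (n : ℕ) : (epsWord n).toList = finRange n :=
  ofFn_id n

theorem toList_perm_of_proj_eq {u v : FreeMonoid (Fin n)} (h : proj n u = proj n v) :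
    u.toList ~ v.toList := by
  refine (Con.conGen_le (c := FreeMonoid.permCon _)).2 (fun a b hab => ?_)
    (PresentedMonoid.mk_eq_mk_iff.1 h)
  obtain ⟨σ, rfl, rfl⟩ := hab
  show (permWord σ).toList ~ (epsWord n).toList
  rw [toList_epsWord]
  exact toList_permWord_perm σ

theorem proj_permWord (σ : Equiv.Perm (Fin n)) : proj n (permWord σ) = proj n (epsWord n) :=
  PresentedMonoid.mk_eq_mk_of_rel ⟨σ, rfl, rfl⟩

theorem proj_ofList_of_perm_finRange {l : List (Fin n)} (h : l ~ finRange n) :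
    proj n (FreeMonoid.ofList l) = proj n (epsWord n) := by
  obtain ⟨σ, rfl⟩ := exists_perm_ofFn_eq h
  exact proj_permWord σ

theorem exists_append_perm_finRange {a : List (Fin n)} (ha : a.Nodup) :
    ∃ b, a ++ b ~ finRange n := by
  have hsub : a <+~ finRange n := subperm_of_subset ha fun x _ => mem_finRange x
  exact ⟨_, subperm_append_diff_self_of_count_le fun x _ => hsub.count_le x⟩

theorem proj_ofList_mul_eps {a a' : List (Fin n)} (ha : a.Nodup) (ha' : a' ~ a) :
    proj n (FreeMonoid.ofList a') * proj n (epsWord n)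
      = proj n (epsWord n) * proj n (FreeMonoid.ofList a) := by
  obtain ⟨b, hb⟩ := exists_append_perm_finRange ha
  calc proj n (FreeMonoid.ofList a') * proj n (epsWord n)
      = proj n (FreeMonoid.ofList a') * proj n (FreeMonoid.ofList (b ++ a)) := by
        rw [proj_ofList_of_perm_finRange (perm_append_comm.trans hb)]
    _ = proj n (FreeMonoid.ofList (a' ++ b)) * proj n (FreeMonoid.ofList a) := by
        simp only [FreeMonoid.ofList_append, map_mul, mul_assoc]
    _ = proj n (epsWord n) * proj n (FreeMonoid.ofList a) := by
        rw [proj_ofList_of_perm_finRange ((ha'.append_right b).trans hb)]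

theorem commute_proj_eps (w : FreeMonoid (Fin n)) :
    Commute (proj n (epsWord n)) (proj n w) := by
  induction w using FreeMonoid.inductionOn' with
  | one => simp
  | of_mul i w ih =>
    rw [map_mul]
    exact .mul_right (proj_ofList_mul_eps (nodup_singleton i) (.refl _)).symm ih

theorem eps_mul_proj_ofList_swap (i j : Fin n) :
    proj n (epsWord n) * proj n (FreeMonoid.ofList [i, j])
      = proj n (epsWord n) * proj n (FreeMonoid.ofList [j, i]) := by
  rcases eq_or_ne i j with rfl | hij
  · rfl
  rw [← proj_ofList_mul_eps (by simpa using hij) (.swap i j []), commute_proj_eps]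

theorem eps_mul_proj_ofList_of_perm {l₁ l₂ : List (Fin n)} (h : l₁ ~ l₂) :
    proj n (epsWord n) * proj n (FreeMonoid.ofList l₁)
      = proj n (epsWord n) * proj n (FreeMonoid.ofList l₂) := by
  induction h with
  | nil => rfl
  | cons x _ ih =>
    simp only [FreeMonoid.ofList_cons, map_mul]
    rw [(commute_proj_eps _).left_comm, ih, ← (commute_proj_eps _).left_comm]
  | swap x y l =>
    change _ * proj n (FreeMonoid.ofList ([y, x] ++ l))
      = _ * proj n (FreeMonoid.ofList ([x, y] ++ l))
    rw [FreeMonoid.ofList_append, FreeMonoid.ofList_append, map_mul, map_mul, ← mul_assoc,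
      ← mul_assoc, eps_mul_proj_ofList_swap]
  | trans _ _ ih₁ ih₂ => exact ih₁.trans ih₂

theorem HasPermSubword.exists_eq_eps_mul {u : FreeMonoid (Fin n)} (hu : HasPermSubword u) :
    ∃ l : List (Fin n), proj n u = proj n (epsWord n) * proj n (FreeMonoid.ofList l) ∧
      u.toList ~ finRange n ++ l := by
  obtain ⟨σ, a, b, rfl⟩ := hu
  refine ⟨a.toList ++ b.toList, ?_, ?_⟩
  · rw [map_mul, map_mul, proj_permWord, FreeMonoid.ofList_append,
      FreeMonoid.ofList_toList, FreeMonoid.ofList_toList, map_mul, ← mul_assoc,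
      (commute_proj_eps a).eq]
  · simp only [FreeMonoid.toList_mul, ← append_assoc]
    exact (perm_append_comm.append_right _).trans
      (((toList_permWord_perm σ).append_right _).append_right _)

end

theorem proj_eq_iff_count_eq_general (n : ℕ) (u v : FreeMonoid (Fin n))
    (hu : HasPermSubword u) (hv : HasPermSubword v) :
    proj n u = proj n v ↔
      ∀ i : Fin n, (FreeMonoid.toList u).count i = (FreeMonoid.toList v).count i := by
  rw [← perm_iff_count]
  refine ⟨toList_perm_of_proj_eq, fun h => ?_⟩
  obtain ⟨l₁, hu₁, hp₁⟩ := hu.exists_eq_eps_mul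
  obtain ⟨l₂, hv₂, hp₂⟩ := hv.exists_eq_eps_mul
  rw [hu₁, hv₂]
  exact eps_mul_proj_ofList_of_perm ((perm_append_left_iff _).1 (hp₁.symm.trans (h.trans hp₂)))

/-- Two words, each containing a subword of the form `x_{σ(1)}⋯x_{σ(n)}`, represent the same
element of `S_n(Sym_n)` if and only if every generator occurs in both the same
number of times. -/
theorem proj_eq_iff_count_eq (n : ℕ) (hn : 1 ≤ n) (u v : FreeMonoid (Fin n))
    (hu : HasPermSubword u) (hv : HasPermSubword v) :
    proj n u = proj n v ↔
      ∀ i : Fin n, (FreeMonoid.toList u).count i = (FreeMonoid.toList v).count i :=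
  proj_eq_iff_count_eq_general n u v hu hv
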